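/- arXiv:0711.1897 — 2 statements merged into one kernel-verified Lean document; each statement's English description precedes it below -/
import Mathlib

section
/- Let η ≥ −1/2 be real, let α and β be complex numbers with Re α > 0 and Re β > 0, and let φ : (0,∞) → ℝ be continuous with compact support contained in (0,∞). Then for every t > 0, (I^β_{η+α}(I^α_η φ))(t) = (I^{α+β}_η φ)(t), i.e., (2 t^{−2(β+η+α)}/Γ(β)) ∫_0^t (t² − r²)^{β−1} r^{2(η+α)+1} (I^α_η φ)(r) dr = (2 t^{−2(α+β+η)}/Γ(α+β)) ∫_0^t (t² − r²)^{α+β−1} r^{2η+1} φ(r) dr. -/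
/-!
Put `w(s) = s^(2μ+1) φ(s)`. After cancelling `r^(2(μ+α)+1) · r^(-2(α+μ)) = r`, the left side is
`(4 t^(-2(α+β+μ)) / (Γ(α) Γ(β)))` times an iterated integral over the triangle `0 < s < r < t`.
Exchanging the order of integration, the inner integral becomes
`(w(s)/2) ∫_s^t (r² - s²)^(α-1) (t² - r²)^(β-1) 2r dr`, which the substitution `x = r²` turns into
a Beta integral on `[s², t²]`, equal to `(t² - s²)^(α+β-1) B(α, β)`; and
`B(α, β) = Γ(α) Γ(β) / Γ(α+β)`. The exchange is justified by Fubini's theorem: the same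
computation with `Re α`, `Re β` in place of `α`, `β` bounds the absolute integral, because `w` is
bounded on `(0, t)` and `(t² - s²)^(Re α + Re β - 1)` is integrable.
-/

open MeasureTheory

/-- The Erdélyi–Kober fractional integral `(I^α_μ φ)(t)` with complex order `α`
(`Re α > 0`), complex parameter `μ`, for a complex-valued function `φ` on `(0,∞)`. -/
noncomputable def EK (α μ : ℂ) (φ : ℝ → ℂ) (t : ℝ) : ℂ :=
  (2 * (t : ℂ) ^ (-2 * (α + μ)) / Complex.Gamma α) *
    ∫ r in (0 : ℝ)..t,
      (((t ^ 2 - r ^ 2 : ℝ)) : ℂ) ^ (α - 1) * (r : ℂ) ^ (2 * μ + 1) * φ r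

open Set Function

theorem integral_sub_cpow_mul_sub_cpow (u v : ℂ) {p q : ℝ} (hpq : p < q) :
    ∫ x in p..q, ((x - p : ℝ) : ℂ) ^ (u - 1) * ((q - x : ℝ) : ℂ) ^ (v - 1)
      = ((q - p : ℝ) : ℂ) ^ (u + v - 1) * Complex.betaIntegral u v := by
  have h := intervalIntegral.integral_comp_sub_right
    (fun y : ℝ => (y : ℂ) ^ (u - 1) * (((q - p : ℝ) : ℂ) - y) ^ (v - 1)) p (a := p) (b := q)
  rw [sub_self, Complex.betaIntegral_scaled u v (sub_pos.2 hpq)] at h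
  rw [← h]
  refine intervalIntegral.integral_congr fun x _ => ?_
  push_cast
  ring_nf

theorem integral_sub_rpow_mul_sub_rpow (a b : ℝ) {p q : ℝ} (hpq : p < q) :
    ∫ x in p..q, (x - p) ^ (a - 1) * (q - x) ^ (b - 1)
      = (q - p) ^ (a + b - 1) * (Complex.betaIntegral a b).re := by
  have h : ((∫ x in p..q, (x - p) ^ (a - 1) * (q - x) ^ (b - 1) : ℝ) : ℂ)
      = ((q - p : ℝ) : ℂ) ^ ((a : ℂ) + b - 1) * Complex.betaIntegral a b := by
    rw [← intervalIntegral.integral_ofReal, ← integral_sub_cpow_mul_sub_cpow _ _ hpq]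
    refine intervalIntegral.integral_congr fun x hx => ?_
    rw [uIcc_of_le hpq.le] at hx
    push_cast
    rw [Complex.ofReal_cpow (by linarith [hx.1]), Complex.ofReal_cpow (by linarith [hx.2])]
    push_cast
    ring_nf
  rw [← Complex.ofReal_re (∫ x in p..q, _), h, ← Complex.ofReal_one, ← Complex.ofReal_add,
    ← Complex.ofReal_sub, ← Complex.ofReal_cpow (sub_pos.2 hpq).le, Complex.re_ofReal_mul]

theorem intervalIntegrable_sub_cpow_mul_sub_cpow {u v : ℂ} (hu : 0 < u.re) (hv : 0 < v.re)
    {p q : ℝ} (hpq : p < q) :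
    IntervalIntegrable (fun x => ((x - p : ℝ) : ℂ) ^ (u - 1) * ((q - x : ℝ) : ℂ) ^ (v - 1))
      volume p q := by
  have hpow : ∀ {c : ℂ}, 0 < c.re →
      IntervalIntegrable (fun y : ℝ => (y : ℂ) ^ (c - 1)) volume 0 (q - p) := fun hc =>
    intervalIntegral.intervalIntegrable_cpow' (by simpa using hc)
  -- each factor is singular at one endpoint only, so split the interval between them
  obtain ⟨m, hpm, hmq⟩ := exists_between hpq
  refine IntervalIntegrable.trans (b := m) ?_ ?_
  · refine ((hpow hu).comp_sub_right p).mono_set ?_ |>.mul_continuousOn ?_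
    · rw [uIcc_of_le hpm.le, sub_add_cancel, zero_add, uIcc_of_le hpq.le]
      exact Icc_subset_Icc_right hmq.le
    · refine (Continuous.continuousOn (by fun_prop)).cpow_const fun x hx => ?_
      rw [uIcc_of_le hpm.le] at hx
      exact Complex.ofReal_mem_slitPlane.2 (by linarith [hx.2])
  · refine (((hpow hv).comp_sub_left q).symm.mono_set ?_).continuousOn_mul ?_
    · rw [uIcc_of_le hmq.le, sub_sub_cancel, sub_zero, uIcc_of_le hpq.le]
      exact Icc_subset_Icc_left hpm.le
    · refine (Continuous.continuousOn (by fun_prop)).cpow_const fun x hx => ?_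
      rw [uIcc_of_le hmq.le] at hx
      exact Complex.ofReal_mem_slitPlane.2 (by linarith [hx.1])

section SquareSubstitution

variable {E : Type*} [NormedAddCommGroup E] [NormedSpace ℝ E] {s t : ℝ}

theorem image_sq_Ioo (hs : 0 ≤ s) (hst : s ≤ t) :
    (fun x : ℝ => x ^ 2) '' Ioo s t = Ioo (s ^ 2) (t ^ 2) :=
  (continuous_pow 2).continuousOn.image_Ioo_of_strictMonoOn hst
    ((pow_left_strictMonoOn₀ two_ne_zero).mono fun _ hx => hs.trans hx.1)

theorem integrableOn_Ioo_sq_iff (hs : 0 ≤ s) (hst : s ≤ t) (g : ℝ → E) :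
    IntegrableOn g (Ioo (s ^ 2) (t ^ 2)) ↔
      IntegrableOn (fun r => (2 * r) • g (r ^ 2)) (Ioo s t) := by
  rw [← image_sq_Ioo hs hst, integrableOn_image_iff_integrableOn_abs_deriv_smul measurableSet_Ioo
    (fun x _ => by simpa using (hasDerivAt_pow 2 x).hasDerivWithinAt)
    ((pow_left_strictMonoOn₀ two_ne_zero).mono fun _ hx => hs.trans hx.1.le).injOn]
  refine integrableOn_congr_fun (fun r hr => ?_) measurableSet_Ioo
  simp only [abs_of_pos (by linarith [hr.1] : 0 < 2 * r)]

theorem integral_Ioo_sq (hs : 0 ≤ s) (hst : s ≤ t) (g : ℝ → E) :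
    ∫ x in Ioo (s ^ 2) (t ^ 2), g x = ∫ r in Ioo s t, (2 * r) • g (r ^ 2) := by
  rw [← image_sq_Ioo hs hst, integral_image_eq_integral_abs_deriv_smul measurableSet_Ioo
    (fun x _ => by simpa using (hasDerivAt_pow 2 x).hasDerivWithinAt)
    ((pow_left_strictMonoOn₀ two_ne_zero).mono fun _ hx => hs.trans hx.1.le).injOn]
  refine setIntegral_congr_fun measurableSet_Ioo fun r hr => ?_
  simp only [abs_of_pos (by linarith [hr.1] : 0 < 2 * r)]

theorem integrableOn_smul_sq_sub_sq_cpow_mul {u v : ℂ} (hu : 0 < u.re) (hv : 0 < v.re)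
    (hs : 0 ≤ s) (hst : s < t) :
    IntegrableOn (fun r => (2 * r) •
      (((r ^ 2 - s ^ 2 : ℝ) : ℂ) ^ (u - 1) * ((t ^ 2 - r ^ 2 : ℝ) : ℂ) ^ (v - 1))) (Ioo s t) := by
  have hsq : s ^ 2 < t ^ 2 := pow_lt_pow_left₀ hst hs two_ne_zero
  refine (integrableOn_Ioo_sq_iff hs hst.le
    (fun x => ((x - s ^ 2 : ℝ) : ℂ) ^ (u - 1) * ((t ^ 2 - x : ℝ) : ℂ) ^ (v - 1))).1 ?_
  exact (intervalIntegrable_iff_integrableOn_Ioo_of_le hsq.le).1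
    (intervalIntegrable_sub_cpow_mul_sub_cpow hu hv hsq)

theorem integral_smul_sq_sub_sq_cpow_mul (u v : ℂ) (hs : 0 ≤ s) (hst : s < t) :
    ∫ r in Ioo s t, (2 * r) •
      (((r ^ 2 - s ^ 2 : ℝ) : ℂ) ^ (u - 1) * ((t ^ 2 - r ^ 2 : ℝ) : ℂ) ^ (v - 1))
      = ((t ^ 2 - s ^ 2 : ℝ) : ℂ) ^ (u + v - 1) * Complex.betaIntegral u v := by
  have hsq : s ^ 2 < t ^ 2 := pow_lt_pow_left₀ hst hs two_ne_zero
  rw [← integral_Ioo_sq hs hst.le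
      (fun x => ((x - s ^ 2 : ℝ) : ℂ) ^ (u - 1) * ((t ^ 2 - x : ℝ) : ℂ) ^ (v - 1)),
    ← integral_Ioc_eq_integral_Ioo, ← intervalIntegral.integral_of_le hsq.le,
    integral_sub_cpow_mul_sub_cpow u v hsq]

theorem integral_norm_smul_sq_sub_sq_cpow_mul (u v : ℂ) (hs : 0 ≤ s) (hst : s < t) :
    ∫ r in Ioo s t, ‖(2 * r) •
      (((r ^ 2 - s ^ 2 : ℝ) : ℂ) ^ (u - 1) * ((t ^ 2 - r ^ 2 : ℝ) : ℂ) ^ (v - 1))‖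
      = (t ^ 2 - s ^ 2) ^ (u.re + v.re - 1) * (Complex.betaIntegral u.re v.re).re := by
  have hsq : s ^ 2 < t ^ 2 := pow_lt_pow_left₀ hst hs two_ne_zero
  rw [← integral_sub_rpow_mul_sub_rpow _ _ hsq, intervalIntegral.integral_of_le hsq.le,
    integral_Ioc_eq_integral_Ioo, integral_Ioo_sq hs hst.le]
  refine setIntegral_congr_fun measurableSet_Ioo fun r hr => ?_
  have hr0 : 0 < r := hs.trans_lt hr.1
  have hrs : 0 < r ^ 2 - s ^ 2 := sub_pos.2 (pow_lt_pow_left₀ hr.1 hs two_ne_zero)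
  have htr : 0 < t ^ 2 - r ^ 2 := sub_pos.2 (pow_lt_pow_left₀ hr.2 hr0.le two_ne_zero)
  rw [norm_smul, Real.norm_of_nonneg (by positivity), norm_mul,
    Complex.norm_cpow_eq_rpow_re_of_pos hrs, Complex.norm_cpow_eq_rpow_re_of_pos htr, smul_eq_mul]
  simp

end SquareSubstitution

theorem integral_Ioo_integral_Ioo_swap {E : Type*} [NormedAddCommGroup E] [NormedSpace ℝ E]
    {a b : ℝ} {F : ℝ → ℝ → E}
    (hF : AEStronglyMeasurable (uncurry F)
      ((volume.restrict (Ioo a b)).prod (volume.restrict (Ioo a b))))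
    (hsec : ∀ s ∈ Ioo a b, IntegrableOn (F · s) (Ioo s b))
    (hnorm : IntegrableOn (fun s => ∫ r in Ioo s b, ‖F r s‖) (Ioo a b)) :
    ∫ r in Ioo a b, ∫ s in Ioo a r, F r s = ∫ s in Ioo a b, ∫ r in Ioo s b, F r s := by
  set μ := volume.restrict (Ioo a b)
  set K : ℝ → ℝ → E := fun r s => (Iio r).indicator (F r) s
  have hK_left : ∀ r ∈ Ioo a b, ∫ s, K r s ∂μ = ∫ s in Ioo a r, F r s := fun r hr => by
    rw [integral_indicator measurableSet_Iio, Measure.restrict_restrict measurableSet_Iio,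
      Iio_inter_Ioo, min_eq_left hr.2.le]
  have hK_right : ∀ r s, K r s = (Ioi s).indicator (F · s) r := fun r s => by
    simp [K, indicator_apply]
  have hμ_Ioi : ∀ s ∈ Ioo a b, μ.restrict (Ioi s) = volume.restrict (Ioo s b) := fun s hs => by
    rw [Measure.restrict_restrict measurableSet_Ioi, Ioi_inter_Ioo, max_eq_left hs.1.le]
  have hKint : Integrable (uncurry K) (μ.prod μ) := by
    have hKmeas : AEStronglyMeasurable (uncurry K) (μ.prod μ) :=
      hF.indicator (measurableSet_lt measurable_snd measurable_fst)
    refine (integrable_prod_iff' hKmeas).2 ⟨?_, ?_⟩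
    · refine (ae_restrict_iff' measurableSet_Ioo).2 (Filter.Eventually.of_forall fun s hs => ?_)
      simp only [uncurry_apply_pair, hK_right]
      rw [integrable_indicator_iff measurableSet_Ioi, IntegrableOn, hμ_Ioi s hs]
      exact hsec s hs
    · refine hnorm.congr_fun (fun s hs => ?_) measurableSet_Ioo
      simp only [uncurry_apply_pair, hK_right, norm_indicator_eq_indicator_norm]
      rw [integral_indicator measurableSet_Ioi, hμ_Ioi s hs]
  calc ∫ r in Ioo a b, ∫ s in Ioo a r, F r s = ∫ r, ∫ s, K r s ∂μ ∂μ :=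
        setIntegral_congr_fun measurableSet_Ioo fun r hr => (hK_left r hr).symm
    _ = ∫ s, ∫ r, K r s ∂μ ∂μ := integral_integral_swap hKint
    _ = ∫ s in Ioo a b, ∫ r in Ioo s b, F r s :=
        setIntegral_congr_fun measurableSet_Ioo fun s hs => by
          simp only [hK_right]
          rw [integral_indicator measurableSet_Ioi, hμ_Ioi s hs]

theorem integrableOn_sq_sub_sq_rpow {c : ℝ} (hc : -1 < c) {t : ℝ} (ht : 0 < t) :
    IntegrableOn (fun s => (t ^ 2 - s ^ 2) ^ c) (Ioo 0 t) := by
  rw [← intervalIntegrable_iff_integrableOn_Ioo_of_le ht.le]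
  have hsub : IntervalIntegrable (fun s => (t - s) ^ c) volume 0 t := by
    simpa using
      ((intervalIntegral.intervalIntegrable_rpow' hc (a := 0) (b := t)).comp_sub_left t).symm
  refine (hsub.mul_continuousOn (g := fun s => (t + s) ^ c) fun s hs => ?_).congr ?_
  · rw [uIcc_of_le ht.le] at hs
    exact (ContinuousAt.rpow_const (f := fun s => t + s) (by fun_prop)
      (Or.inl (by linarith [hs.1]))).continuousWithinAt
  · intro s hs
    rw [uIoc_of_le ht.le] at hs
    simp only [← Real.mul_rpow (by linarith [hs.2] : 0 ≤ t - s) (by linarith [hs.1] : 0 ≤ t + s)]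
    ring_nf

theorem integral_Ioo_cpow_mul_integral_Ioo_cpow_mul {α β : ℂ} (hα : 0 < α.re) (hβ : 0 < β.re)
    {t : ℝ} (ht : 0 < t) {w : ℝ → ℂ} (hw : AEStronglyMeasurable w (volume.restrict (Ioo 0 t)))
    {M : ℝ} (hM : ∀ s ∈ Ioo 0 t, ‖w s‖ ≤ M) :
    ∫ r in Ioo 0 t, ((t ^ 2 - r ^ 2 : ℝ) : ℂ) ^ (β - 1) * r *
        ∫ s in Ioo 0 r, ((r ^ 2 - s ^ 2 : ℝ) : ℂ) ^ (α - 1) * w s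
      = Complex.betaIntegral α β / 2 *
          ∫ s in Ioo 0 t, ((t ^ 2 - s ^ 2 : ℝ) : ℂ) ^ (α + β - 1) * w s := by
  set F : ℝ → ℝ → ℂ := fun r s => w s / 2 * ((2 * r) •
    (((r ^ 2 - s ^ 2 : ℝ) : ℂ) ^ (α - 1) * ((t ^ 2 - r ^ 2 : ℝ) : ℂ) ^ (β - 1)))
  have hF : AEStronglyMeasurable (uncurry F)
      ((volume.restrict (Ioo 0 t)).prod (volume.restrict (Ioo 0 t))) := by
    have hw_snd : AEStronglyMeasurable (fun p : ℝ × ℝ => w p.2)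
        ((volume.restrict (Ioo 0 t)).prod (volume.restrict (Ioo 0 t))) := hw.comp_snd
    simp only [uncurry_def, F, div_eq_mul_inv]
    exact (hw_snd.mul_const _).mul (Measurable.aestronglyMeasurable (by fun_prop))
  have hsec : ∀ s ∈ Ioo 0 t, IntegrableOn (F · s) (Ioo s t) := fun s hs =>
    (integrableOn_smul_sq_sub_sq_cpow_mul hα hβ hs.1.le hs.2).const_mul (w s / 2)
  have hnorm : IntegrableOn (fun s => ∫ r in Ioo s t, ‖F r s‖) (Ioo 0 t) := by
    set c := α.re + β.re - 1
    have hc : -1 < c := by linarith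
    have heval : ∀ s ∈ Ioo 0 t, ∫ r in Ioo s t, ‖F r s‖ = ‖w s‖ *
        ((t ^ 2 - s ^ 2) ^ c * ((Complex.betaIntegral α.re β.re).re / 2)) := fun s hs => by
      simp only [F, norm_mul, norm_div, Complex.norm_ofNat]
      rw [integral_const_mul, integral_norm_smul_sq_sub_sq_cpow_mul α β hs.1.le hs.2]
      ring
    refine IntegrableOn.congr_fun ?_ (fun s hs => (heval s hs).symm) measurableSet_Ioo
    refine ((integrableOn_sq_sub_sq_rpow hc ht).mul_const _).bdd_mul hw.norm (c := M) ?_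
    exact (ae_restrict_iff' measurableSet_Ioo).2 (Filter.Eventually.of_forall fun s hs => by
      simpa using hM s hs)
  calc _ = ∫ r in Ioo 0 t, ∫ s in Ioo 0 r, F r s := by
        refine setIntegral_congr_fun measurableSet_Ioo fun r _ => ?_
        rw [← integral_const_mul]
        refine setIntegral_congr_fun measurableSet_Ioo fun s _ => ?_
        simp only [F, Complex.real_smul]
        push_cast
        ring
    _ = ∫ s in Ioo 0 t, ∫ r in Ioo s t, F r s := integral_Ioo_integral_Ioo_swap hF hsec hnorm
    _ = _ := by
        rw [← integral_const_mul]
        refine setIntegral_congr_fun measurableSet_Ioo fun s hs => ?_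
        simp only [F]
        rw [integral_const_mul, integral_smul_sq_sub_sq_cpow_mul α β hs.1.le hs.2]
        ring

theorem EK_eq_integral_Ioo (α μ : ℂ) (f : ℝ → ℂ) {t : ℝ} (ht : 0 ≤ t) :
    EK α μ f t = 2 * (t : ℂ) ^ (-2 * (α + μ)) / Complex.Gamma α *
      ∫ r in Ioo 0 t, ((t ^ 2 - r ^ 2 : ℝ) : ℂ) ^ (α - 1) * ((r : ℂ) ^ (2 * μ + 1) * f r) := by
  simp only [EK, intervalIntegral.integral_of_le ht, integral_Ioc_eq_integral_Ioo, mul_assoc]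

theorem ofReal_cpow_mul_EK (α μ : ℂ) (f : ℝ → ℂ) {r : ℝ} (hr : 0 < r) :
    (r : ℂ) ^ (2 * (μ + α) + 1) * EK α μ f r = 2 / Complex.Gamma α *
      (r * ∫ s in Ioo 0 r, ((r ^ 2 - s ^ 2 : ℝ) : ℂ) ^ (α - 1) * ((s : ℂ) ^ (2 * μ + 1) * f s)) := by
  have hpow : (r : ℂ) ^ (2 * (μ + α) + 1) * (r : ℂ) ^ (-2 * (α + μ)) = r := by
    rw [← Complex.cpow_add _ _ (Complex.ofReal_ne_zero.2 hr.ne'),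
      show 2 * (μ + α) + 1 + -2 * (α + μ) = 1 by ring, Complex.cpow_one]
  rw [EK_eq_integral_Ioo α μ f hr.le]
  generalize (∫ s in Ioo 0 r, ((r ^ 2 - s ^ 2 : ℝ) : ℂ) ^ (α - 1) *
    ((s : ℂ) ^ (2 * μ + 1) * f s)) = I
  linear_combination (2 / Complex.Gamma α * I) * hpow

theorem EK_EK {α β : ℂ} (hα : 0 < α.re) (hβ : 0 < β.re) (μ : ℂ) {f : ℝ → ℂ} {t : ℝ}
    (ht : 0 < t) (hf : AEStronglyMeasurable f (volume.restrict (Ioo 0 t))) {M : ℝ}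
    (hM : ∀ s ∈ Ioo 0 t, ‖(s : ℂ) ^ (2 * μ + 1) * f s‖ ≤ M) :
    EK β (μ + α) (EK α μ f) t = EK (α + β) μ f t := by
  have hw : AEStronglyMeasurable (fun s : ℝ => (s : ℂ) ^ (2 * μ + 1) * f s)
      (volume.restrict (Ioo 0 t)) :=
    (Measurable.aestronglyMeasurable (by fun_prop)).mul hf
  have hB : Complex.betaIntegral α β
      = Complex.Gamma α * Complex.Gamma β / Complex.Gamma (α + β) := by
    rw [Complex.Gamma_mul_Gamma_eq_betaIntegral hα hβ, mul_div_cancel_left₀ _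
      (Complex.Gamma_ne_zero_of_re_pos (by rw [Complex.add_re]; positivity))]
  have hΓα := Complex.Gamma_ne_zero_of_re_pos hα
  have hΓβ := Complex.Gamma_ne_zero_of_re_pos hβ
  rw [EK_eq_integral_Ioo _ _ _ ht.le, EK_eq_integral_Ioo _ _ _ ht.le]
  calc _ = 2 * (t : ℂ) ^ (-2 * (β + (μ + α))) / Complex.Gamma β * (2 / Complex.Gamma α *
        ∫ r in Ioo 0 t, ((t ^ 2 - r ^ 2 : ℝ) : ℂ) ^ (β - 1) * r *
          ∫ s in Ioo 0 r, ((r ^ 2 - s ^ 2 : ℝ) : ℂ) ^ (α - 1) * ((s : ℂ) ^ (2 * μ + 1) * f s)) := by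
        congr 1
        rw [← integral_const_mul]
        refine setIntegral_congr_fun measurableSet_Ioo fun r hr => ?_
        rw [ofReal_cpow_mul_EK α μ f hr.1]
        ring
    _ = _ := by
        rw [integral_Ioo_cpow_mul_integral_Ioo_cpow_mul hα hβ ht hw hM, hB,
          show -2 * (β + (μ + α)) = -2 * (α + β + μ) by ring]
        field_simp

theorem erdelyi_kober_composition_general
    (η : ℝ) (hη : -1/2 ≤ η) (α β : ℂ) (hα : 0 < α.re) (hβ : 0 < β.re)
    (φ : ℝ → ℝ) (hφ : Continuous φ)
    (t : ℝ) (ht : 0 < t) :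
    EK β ((η : ℂ) + α) (EK α (η : ℂ) (fun r => (φ r : ℂ))) t
      = EK (α + β) (η : ℂ) (fun r => (φ r : ℂ)) t := by
  obtain ⟨C, hC⟩ := isCompact_Icc.exists_bound_of_continuousOn (hφ.continuousOn (s := Icc 0 t))
  refine EK_EK hα hβ η ht (by fun_prop : Continuous fun r => (φ r : ℂ)).aestronglyMeasurable
    (M := t ^ (2 * η + 1) * C) fun s hs => ?_
  have hre : (2 * (η : ℂ) + 1).re = 2 * η + 1 := by simp
  rw [norm_mul, Complex.norm_cpow_eq_rpow_re_of_pos hs.1, Complex.norm_real, hre]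
  exact mul_le_mul (Real.rpow_le_rpow hs.1.le hs.2.le (by linarith))
    (hC s (Ioo_subset_Icc_self hs)) (norm_nonneg _) (by positivity)

/-- the semigroup (composition) property of Erdélyi–Kober integrals:
`I^β_{η+α} I^α_η φ = I^{α+β}_η φ`. -/
theorem erdelyi_kober_composition
    (η : ℝ) (hη : -1/2 ≤ η) (α β : ℂ) (hα : 0 < α.re) (hβ : 0 < β.re)
    (φ : ℝ → ℝ) (hφ : Continuous φ) (hφc : HasCompactSupport φ)
    (hsupp : tsupport φ ⊆ Set.Ioi (0 : ℝ))
    (t : ℝ) (ht : 0 < t) :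
    EK β ((η : ℂ) + α) (EK α (η : ℂ) (fun r => (φ r : ℂ))) t
      = EK (α + β) (η : ℂ) (fun r => (φ r : ℂ)) t :=
  erdelyi_kober_composition_general η hη α β hα hβ φ hφ t ht
end

section
/- Let f₀ : [0,∞) → ℝ be continuous with f₀(r) = 0 for all r ≥ 1, and define F₀(t) = (1/(2t)) ∫_{t−1}^{1} f₀(r) r dr for t ∈ (1,2). Then for every r ∈ (0,1), f₀(r) = −(2/r) · [d/dt (t F₀(t))]|_{t = 1+r}; that is, the radial profile f₀ is recovered from the spherical mean data F₀(t) known only for t ∈ (1,2). -/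
open MeasureTheory

/-!
For `1 < t < 2` the data satisfy `t F₀(t) = ½ ∫_{t-1}^1 f₀(r) r dr`, so by the fundamental theorem
of calculus `d/dt (t F₀(t)) = -½ f₀(t - 1)(t - 1)`; evaluating at `t = 1 + r` and solving for
`f₀(r)` gives the inversion formula.
-/

open Filter Topology

theorem ContinuousOn.hasDerivAt_integral_sub_const_left {E : Type*} [NormedAddCommGroup E]
    [NormedSpace ℝ E] [CompleteSpace E] {g : ℝ → E} {U : Set ℝ} (hg : ContinuousOn g U)
    (hU : IsOpen U) {b c t : ℝ} (hsub : Set.uIcc (t - c) b ⊆ U) :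
    HasDerivAt (fun s => ∫ x in (s - c)..b, g x) (-g (t - c)) t := by
  have hmem : t - c ∈ U := hsub Set.left_mem_uIcc
  have hleft : HasDerivAt (fun u => ∫ x in u..b, g x) (-g (t - c)) (t - c) :=
    intervalIntegral.integral_hasDerivAt_left ((hg.mono hsub).intervalIntegrable)
      (hg.stronglyMeasurableAtFilter hU _ hmem) (hg.continuousAt (hU.mem_nhds hmem))
  simpa using hleft.comp_sub_const t c

theorem hasDerivAt_mul_of_eq_integral_sub_one {f₀ F₀ : ℝ → ℝ} (hf₀ : ContinuousOn f₀ (Set.Ici 0))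
    (hF₀ : ∀ t ∈ Set.Ioo (1 : ℝ) 2, F₀ t = (1 / (2 * t)) * ∫ r in (t - 1)..1, f₀ r * r)
    {r : ℝ} (hr : r ∈ Set.Ioo (0 : ℝ) 1) :
    HasDerivAt (fun t => t * F₀ t) (-(f₀ r * r) / 2) (1 + r) := by
  obtain ⟨hr0, hr1⟩ := hr
  have hcont : ContinuousOn (fun x => f₀ x * x) (Set.Ioi 0) :=
    (hf₀.mono Set.Ioi_subset_Ici_self).mul continuousOn_id
  have hsub : Set.uIcc (1 + r - 1) 1 ⊆ Set.Ioi 0 := by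
    rw [add_sub_cancel_left, Set.uIcc_of_le hr1.le]
    exact fun x hx => hr0.trans_le hx.1
  have hintegral := (hcont.hasDerivAt_integral_sub_const_left isOpen_Ioi hsub).const_mul (1 / 2)
  have heq : (fun t => t * F₀ t) =ᶠ[𝓝 (1 + r)] fun t => 1 / 2 * ∫ x in (t - 1)..1, f₀ x * x := by
    filter_upwards [Ioo_mem_nhds (by linarith : (1 : ℝ) < 1 + r) (by linarith : 1 + r < 2)]
      with t ht
    have ht0 : t ≠ 0 := by linarith [ht.1]
    rw [hF₀ t ht]
    field_simp
  rw [add_sub_cancel_left] at hintegral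
  exact (hintegral.congr_of_eventuallyEq heq).congr_deriv (by ring)

theorem radial_inversion_large_t_general
    (f₀ : ℝ → ℝ) (hf₀ : ContinuousOn f₀ (Set.Ici 0))
    (F₀ : ℝ → ℝ)
    (hF₀ : ∀ t ∈ Set.Ioo (1 : ℝ) 2,
      F₀ t = (1 / (2 * t)) * ∫ r in (t - 1)..1, f₀ r * r)
    (r : ℝ) (hr : r ∈ Set.Ioo (0 : ℝ) 1) :
    f₀ r = -(2 / r) * deriv (fun t => t * F₀ t) (1 + r) := by
  have hr0 : r ≠ 0 := hr.1.ne'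
  rw [(hasDerivAt_mul_of_eq_integral_sub_one hf₀ hF₀ hr).deriv]
  field_simp

/-- recovery of the radial profile `f₀` from the spherical mean data
`F₀(t)`, known only for `t ∈ (1,2)`. -/
theorem radial_inversion_large_t
    (f₀ : ℝ → ℝ) (hf₀ : ContinuousOn f₀ (Set.Ici 0))
    (hvan : ∀ r : ℝ, 1 ≤ r → f₀ r = 0)
    (F₀ : ℝ → ℝ)
    (hF₀ : ∀ t ∈ Set.Ioo (1 : ℝ) 2,
      F₀ t = (1 / (2 * t)) * ∫ r in (t - 1)..1, f₀ r * r)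
    (r : ℝ) (hr : r ∈ Set.Ioo (0 : ℝ) 1) :
    f₀ r = -(2 / r) * deriv (fun t => t * F₀ t) (1 + r) :=
  radial_inversion_large_t_general f₀ hf₀ F₀ hF₀ r hr
end
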